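/- arXiv:1909.04066 — 2 statements merged into one kernel-verified Lean document; each statement's English description precedes it below -/
import Mathlib

section
/- Let a > 0, L > 0, α > 0. The linear span of the family of functions {x ↦ FRG_n^a(L, α, x) : n ∈ ℕ} is dense in the weighted Lebesgue space L²((0, ∞), w(x) dx), i.e., in the L² space of the measure on (0, ∞) with density w with respect to Lebesgue measure. -/
open MeasureTheory

/-- The Gegenbauer polynomial of degree `n` and order `a`, defined by the
explicit sum `G_n^a(x) = Σ_{j=0}^{⌊n/2⌋} (−1)^j Γ(n+a−j)/(j!(n−2j)!Γ(a)) (2x)^{n−2j}`. -/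
noncomputable def Geg (a : ℝ) (n : ℕ) (x : ℝ) : ℝ :=
  ∑ j ∈ Finset.range (n / 2 + 1),
    (-1 : ℝ) ^ j * Real.Gamma ((n : ℝ) + a - (j : ℝ)) /
      ((Nat.factorial j : ℝ) * (Nat.factorial (n - 2 * j) : ℝ) * Real.Gamma a) *
      (2 * x) ^ (n - 2 * j)

/-- The fractional rational Gegenbauer function `FRG_n^a(L, α, x) = G_n^a((x^α − L)/(x^α + L))`. -/
noncomputable def FRG (a L α : ℝ) (n : ℕ) (x : ℝ) : ℝ :=
  Geg a n ((x ^ α - L) / (x ^ α + L))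

/-- The weight `w(x) = (1 − ((x^α − L)/(x^α + L))²)^{a−1/2} · 2αL x^{α−1}/(x^α + L)²`. -/
noncomputable def FRGweight (a L α : ℝ) (x : ℝ) : ℝ :=
  (1 - ((x ^ α - L) / (x ^ α + L)) ^ 2) ^ (a - 1 / 2) *
    (2 * α * L * x ^ (α - 1) / (x ^ α + L) ^ 2)

/-- The measure `w(x) dx` on `(0, ∞)`. -/
noncomputable def FRGmeasure (a L α : ℝ) : Measure ℝ :=
  (volume.restrict (Set.Ioi 0)).withDensity fun x => ENNReal.ofReal (FRGweight a L α x)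

/-!
The substitution `y = (x^α − L)/(x^α + L)` maps `(0, ∞)` diffeomorphically onto `(−1, 1)` and
carries `w(x) dx` to the Gegenbauer weight `(1 − y²)^{a − 1/2} dy`, which is finite because
`a − 1/2 > −1`. Composition with this substitution is therefore an isometry of `L²` of the image
measure on `[−1, 1]` onto `L²(w(x) dx)`. On the compact interval, continuous functions are dense
in `L²` and polynomials are uniformly dense among them (Weierstrass); finally, `G_n^a` has degree
exactly `n`, so the Gegenbauer polynomials span all polynomials.
-/

open Polynomial Set
open scoped ENNReal

theorem MeasureTheory.Lp.compMeasurePreserving_map_surjective {α β E : Type*}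
    [MeasurableSpace α] [MeasurableSpace β] [NormedAddCommGroup E] {p : ℝ≥0∞} {μ : Measure α}
    {T : α → β} {S : β → α} (hT : Measurable T) (hS : Measurable S)
    (hST : S ∘ T =ᵐ[μ] id) :
    Function.Surjective
      (Lp.compMeasurePreserving T ⟨hT, rfl⟩ : Lp E p (μ.map T) → Lp E p μ) := by
  have hS' : MeasurePreserving S (μ.map T) μ :=
    ⟨hS, by rw [Measure.map_map hS hT, Measure.map_congr hST, Measure.map_id]⟩
  intro f
  refine ⟨Lp.compMeasurePreserving S hS' f, Lp.ext ?_⟩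
  filter_upwards [Lp.coeFn_compMeasurePreserving (Lp.compMeasurePreserving S hS' f) ⟨hT, rfl⟩,
    ae_eq_comp hT.aemeasurable (Lp.coeFn_compMeasurePreserving f hS'), hST] with x h₁ h₂ h₃
  rw [h₁, h₂, Function.comp_assoc, Function.comp_apply, h₃, id]

theorem integrableOn_one_sub_sq_rpow {p : ℝ} (hp : -1 < p) :
    IntegrableOn (fun y : ℝ => (1 - y ^ 2) ^ p) (Ioo (-1) 1) := by
  have hleft : IntervalIntegrable (fun y : ℝ => (1 + y) ^ p * (1 - y) ^ p) volume (-1) 0 := by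
    have h : IntervalIntegrable (fun y : ℝ => (1 + y) ^ p) volume (-1) 0 := by
      simpa using (intervalIntegral.intervalIntegrable_rpow' (a := 0) (b := 1) hp).comp_add_left 1
    refine h.mul_continuousOn (ContinuousOn.rpow_const (by fun_prop) fun y hy => Or.inl ?_)
    rw [uIcc_of_le (by norm_num)] at hy
    linarith [hy.2]
  have hright : IntervalIntegrable (fun y : ℝ => (1 + y) ^ p * (1 - y) ^ p) volume 0 1 := by
    have h : IntervalIntegrable (fun y : ℝ => (1 - y) ^ p) volume 0 1 := by
      simpa using (intervalIntegral.intervalIntegrable_rpow' (a := 1) (b := 0) hp).comp_sub_left 1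
    refine h.continuousOn_mul (ContinuousOn.rpow_const (by fun_prop) fun y hy => Or.inl ?_)
    rw [uIcc_of_le (by norm_num)] at hy
    linarith [hy.1]
  refine ((intervalIntegrable_iff_integrableOn_Ioo_of_le (by norm_num)).1
    (hleft.trans hright)).congr_fun (fun y hy => ?_) measurableSet_Ioo
  dsimp only
  rw [← Real.mul_rpow (by linarith [hy.1]) (by linarith [hy.2])]
  ring_nf

theorem denseRange_toContinuousMapOnAlgHom_Icc (a b : ℝ) :
    DenseRange (Polynomial.toContinuousMapOnAlgHom (Icc a b)) := by
  rw [DenseRange, dense_iff_closure_eq, ← polynomialFunctions_coe,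
    ← Subalgebra.topologicalClosure_coe, polynomialFunctions_closure_eq_top]
  rfl

noncomputable def gegenbauer (a : ℝ) (n : ℕ) : ℝ[X] :=
  ∑ j ∈ Finset.range (n / 2 + 1),
    C ((-1 : ℝ) ^ j * Real.Gamma ((n : ℝ) + a - (j : ℝ)) /
      ((Nat.factorial j : ℝ) * (Nat.factorial (n - 2 * j) : ℝ) * Real.Gamma a) *
      2 ^ (n - 2 * j)) * X ^ (n - 2 * j)

theorem eval_gegenbauer (a : ℝ) (n : ℕ) (x : ℝ) : (gegenbauer a n).eval x = Geg a n x := by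
  simp only [gegenbauer, Geg, eval_finsetSum, eval_mul, eval_C, eval_pow, eval_X, mul_pow,
    mul_assoc]

theorem degree_gegenbauer {a : ℝ} (ha : 0 < a) (n : ℕ) : (gegenbauer a n).degree = n := by
  refine degree_eq_of_le_of_coeff_ne_zero ?_ ?_
  · refine (degree_sum_le _ _).trans (Finset.sup_le fun j _ => ?_)
    exact degree_C_mul_X_pow_le _ _ |>.trans (by exact_mod_cast Nat.sub_le n (2 * j))
  · rw [gegenbauer, finsetSum_coeff, Finset.sum_eq_single 0]
    · have := Real.Gamma_pos_of_pos ha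
      have := Real.Gamma_pos_of_pos (by positivity : (0 : ℝ) < n + a)
      rw [coeff_C_mul_X_pow, if_pos (by simp)]
      simp only [pow_zero, Nat.cast_zero, sub_zero, Nat.factorial_zero, Nat.cast_one, one_mul,
        mul_zero, tsub_zero]
      positivity
    · intro j hj hj0
      rw [coeff_C_mul_X_pow, if_neg]
      rw [Finset.mem_range] at hj
      omega
    · simp

theorem span_range_gegenbauer {a : ℝ} (ha : 0 < a) :
    Submodule.span ℝ (range (gegenbauer a)) = ⊤ :=
  Polynomial.Sequence.span (S := ⟨gegenbauer a, degree_gegenbauer ha⟩) fun n =>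
    isUnit_iff_ne_zero.2 (leadingCoeff_ne_zero.2 (Polynomial.Sequence.ne_zero _ n))

noncomputable def frgRatio (L α x : ℝ) : ℝ := (x ^ α - L) / (x ^ α + L)

noncomputable def frgRatioInv (L α y : ℝ) : ℝ := (L * (1 + y) / (1 - y)) ^ α⁻¹

-- `projIcc` only clips the values at `x ≤ 0`, a null set for `FRGmeasure`.
noncomputable def frgCoord (L α x : ℝ) : Icc (-1 : ℝ) 1 :=
  projIcc (-1) 1 (by norm_num) (frgRatio L α x)

section FRGCoordinates

variable {a L α : ℝ}

theorem frgRatio_mem_Ioo (hL : 0 < L) {x : ℝ} (hx : 0 < x) : frgRatio L α x ∈ Ioo (-1) 1 := by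
  have := Real.rpow_pos_of_pos hx α
  constructor
  · rw [frgRatio, lt_div_iff₀ (by positivity)]; linarith
  · rw [frgRatio, div_lt_one (by positivity)]; linarith

theorem frgRatioInv_frgRatio (hL : 0 < L) (hα : 0 < α) {x : ℝ} (hx : 0 < x) :
    frgRatioInv L α (frgRatio L α x) = x := by
  have := Real.rpow_pos_of_pos hx α
  have hbase : L * (1 + frgRatio L α x) / (1 - frgRatio L α x) = x ^ α := by
    rw [frgRatio]
    field_simp
    rw [div_eq_iff (by ring_nf; positivity)]
    ring
  rw [frgRatioInv, hbase, ← Real.rpow_mul hx.le, mul_inv_cancel₀ hα.ne', Real.rpow_one]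

theorem injOn_frgRatio (hL : 0 < L) (hα : 0 < α) : InjOn (frgRatio L α) (Ioi 0) :=
  fun x hx y hy h => by
    rw [← frgRatioInv_frgRatio hL hα hx, h, frgRatioInv_frgRatio hL hα hy]

theorem hasDerivAt_frgRatio (hL : 0 < L) {x : ℝ} (hx : 0 < x) :
    HasDerivAt (frgRatio L α) (2 * α * L * x ^ (α - 1) / (x ^ α + L) ^ 2) x := by
  have := Real.rpow_pos_of_pos hx α
  have h := Real.hasDerivAt_rpow_const (p := α) (Or.inl hx.ne')
  refine ((h.sub_const L).div (h.add_const L) (by positivity)).congr_deriv ?_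
  rw [Real.rpow_sub_one hx.ne']
  field_simp
  ring

theorem measurable_frgCoord : Measurable (frgCoord L α) :=
  continuous_projIcc.measurable.comp (by unfold frgRatio; fun_prop)

theorem coe_frgCoord (hL : 0 < L) {x : ℝ} (hx : 0 < x) : (frgCoord L α x : ℝ) = frgRatio L α x :=
  congrArg Subtype.val (projIcc_of_mem _ (Ioo_subset_Icc_self (frgRatio_mem_Ioo hL hx)))

theorem ae_pos_FRGmeasure : ∀ᵐ x ∂FRGmeasure a L α, 0 < x :=
  (withDensity_absolutelyContinuous _ _).ae_le (ae_restrict_mem measurableSet_Ioi)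

theorem frgRatioInv_comp_frgCoord_ae_eq (hL : 0 < L) (hα : 0 < α) :
    frgRatioInv L α ∘ Subtype.val ∘ frgCoord L α =ᵐ[FRGmeasure a L α] id := by
  filter_upwards [ae_pos_FRGmeasure] with x hx
  simp only [Function.comp_apply, coe_frgCoord hL hx, frgRatioInv_frgRatio hL hα hx, id]

theorem isFiniteMeasure_FRGmeasure (ha : 0 < a) (hL : 0 < L) (hα : 0 < α) :
    IsFiniteMeasure (FRGmeasure a L α) := by
  constructor
  calc FRGmeasure a L α univ
      = ∫⁻ x in Ioi 0, ENNReal.ofReal |2 * α * L * x ^ (α - 1) / (x ^ α + L) ^ 2| *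
          ENNReal.ofReal ((1 - frgRatio L α x ^ 2) ^ (a - 1 / 2)) := by
        rw [FRGmeasure, withDensity_apply _ MeasurableSet.univ, Measure.restrict_univ]
        refine setLIntegral_congr_fun measurableSet_Ioi fun x (hx : 0 < x) => ?_
        have hderiv : 0 ≤ 2 * α * L * x ^ (α - 1) / (x ^ α + L) ^ 2 := by positivity
        rw [abs_of_nonneg hderiv, ← ENNReal.ofReal_mul hderiv, mul_comm]
        rfl
    _ = ∫⁻ y in frgRatio L α '' Ioi 0, ENNReal.ofReal ((1 - y ^ 2) ^ (a - 1 / 2)) :=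
        (lintegral_image_eq_lintegral_abs_deriv_mul measurableSet_Ioi
          (fun x hx => (hasDerivAt_frgRatio hL hx).hasDerivWithinAt) (injOn_frgRatio hL hα)
          fun y => ENNReal.ofReal ((1 - y ^ 2) ^ (a - 1 / 2))).symm
    _ ≤ ∫⁻ y in Ioo (-1) 1, ENNReal.ofReal ((1 - y ^ 2) ^ (a - 1 / 2)) :=
        lintegral_mono_set (image_subset_iff.2 fun x hx => frgRatio_mem_Ioo hL hx)
    _ < ⊤ := (integrableOn_one_sub_sq_rpow (by linarith)).lintegral_lt_top

end FRGCoordinates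

noncomputable def frgPolyToLp (a L α : ℝ) [IsFiniteMeasure (FRGmeasure a L α)] :
    ℝ[X] →ₗ[ℝ] Lp ℝ 2 (FRGmeasure a L α) :=
  Lp.compMeasurePreservingₗ ℝ (frgCoord L α) ⟨measurable_frgCoord, rfl⟩ ∘ₗ
    (ContinuousMap.toLp 2 ((FRGmeasure a L α).map (frgCoord L α)) ℝ).toLinearMap ∘ₗ
    (Polynomial.toContinuousMapOnAlgHom (Icc (-1 : ℝ) 1)).toLinearMap

section FRGPolyToLp

variable {a L α : ℝ} [IsFiniteMeasure (FRGmeasure a L α)]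

theorem denseRange_frgPolyToLp (hL : 0 < L) (hα : 0 < α) : DenseRange (frgPolyToLp a L α) := by
  have hinv : Measurable (frgRatioInv L α ∘ Subtype.val : Icc (-1 : ℝ) 1 → ℝ) := by
    unfold frgRatioInv; fun_prop
  exact (Lp.compMeasurePreserving_map_surjective measurable_frgCoord hinv
    (frgRatioInv_comp_frgCoord_ae_eq hL hα)).denseRange.comp
    ((ContinuousMap.toLp_denseRange ℝ _ ℝ (p := 2) ENNReal.ofNat_ne_top).comp
      (denseRange_toContinuousMapOnAlgHom_Icc _ _) (ContinuousLinearMap.continuous _))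
    (Lp.isometry_compMeasurePreserving _).continuous

theorem coeFn_frgPolyToLp (hL : 0 < L) (P : ℝ[X]) :
    frgPolyToLp a L α P =ᵐ[FRGmeasure a L α] fun x => P.eval (frgRatio L α x) := by
  let g := ContinuousMap.toLp 2 ((FRGmeasure a L α).map (frgCoord L α)) ℝ
    (P.toContinuousMapOn (Icc (-1 : ℝ) 1))
  filter_upwards [Lp.coeFn_compMeasurePreserving g ⟨measurable_frgCoord, rfl⟩,
    ae_eq_comp measurable_frgCoord.aemeasurable
      (ContinuousMap.coeFn_toLp (𝕜 := ℝ) (p := 2) _ (P.toContinuousMapOn (Icc (-1 : ℝ) 1))),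
    ae_pos_FRGmeasure] with x h₁ h₂ hx
  exact h₁.trans (h₂.trans (by simp [coe_frgCoord hL hx]))

end FRGPolyToLp

/-- The linear span of the fractional rational Gegenbauer functions is dense in
the weighted space `L²((0, ∞), w(x) dx)`. -/
theorem stmt_6 (a L α : ℝ) (ha : 0 < a) (hL : 0 < L) (hα : 0 < α) :
    Dense (↑(Submodule.span ℝ
        {f : Lp ℝ 2 (FRGmeasure a L α) |
          ∃ n : ℕ, ⇑f =ᵐ[FRGmeasure a L α] FRG a L α n}) :
      Set (Lp ℝ 2 (FRGmeasure a L α))) := by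
  have := isFiniteMeasure_FRGmeasure ha hL hα
  refine (denseRange_frgPolyToLp hL hα).mono ?_
  rintro _ ⟨P, rfl⟩
  have hP : P ∈ Submodule.span ℝ (range (gegenbauer a)) := by
    rw [span_range_gegenbauer ha]; trivial
  have hmap := Submodule.mem_map_of_mem (f := frgPolyToLp a L α) hP
  rw [Submodule.map_span] at hmap
  refine Submodule.span_mono ?_ hmap
  rintro _ ⟨_, ⟨n, rfl⟩, rfl⟩
  exact ⟨n, (coeFn_frgPolyToLp hL _).trans (.of_forall fun x => eval_gegenbauer a n _)⟩
end

section
/- Let λ be a real number and define y : (0, ∞) → ℝ by the truncated Baker series y(x) = 1 + λx + (4/3) x^{3/2} + (2λ/5) x^{5/2} + (1/3) x³ + (3λ²/70) x^{7/2}. Then the residual function x ↦ y''(x) − x^{−1/2} y(x)^{3/2} is O(x²) as x → 0⁺; moreover y extends continuously to 0 with y(0) = 1 and right derivative λ at 0. -/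
open Topology Filter Asymptotics

/-!
Put `x = s²`. Then `y(s²) = P(s) = 1 + u(s)` and `s · y''(s²) = R(s)` are polynomials in `s`, with
`u = O(s²)`, and the residual is `s⁻¹ (R(s) - P(s)^{3/2})`. Split
`R - P^{3/2} = (R - Q(u)) + (Q(u) - (1 + u)^{3/2})` with `Q(u) = 1 + 3u/2 + 3u²/8` the binomial
polynomial of `(1 + u)^{3/2}`: the second part is `O(u³) = O(s⁶)`, and Baker's coefficients make
the first part `s⁵` times a polynomial. Hence the residual is `O(s⁴) = O(x²)`.
-/

theorem isBigO_of_eventuallyEq_mul {α : Type*} {l : Filter α} {f g k : α → ℝ} {c : ℝ}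
    (hg : Tendsto g l (𝓝 c)) (h : f =ᶠ[l] fun x => k x * g x) : f =O[l] k :=
  ((isBigO_refl k l).mul (hg.isBigO_one ℝ)).congr' h.symm (by simp)

theorem rpow_three_halves_sq {b : ℝ} (hb : 0 ≤ b) : (b ^ ((3 : ℝ) / 2)) ^ 2 = b ^ 3 := by
  rw [← Real.rpow_natCast, ← Real.rpow_mul hb]
  norm_num

/-- With `Q(u) = 1 + 3u/2 + 3u²/8` and `a = (1 + u)^{3/2}`, `(Q - a)(Q + a) = u³ (1/8 + 9u/64)`
and `Q + a → 2`. -/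
theorem isBigO_one_add_rpow_three_halves :
    (fun u : ℝ => 1 + 3 / 2 * u + 3 / 8 * u ^ 2 - (1 + u) ^ ((3 : ℝ) / 2)) =O[𝓝 0] (· ^ 3) := by
  set Q : ℝ → ℝ := fun u => 1 + 3 / 2 * u + 3 / 8 * u ^ 2
  set a : ℝ → ℝ := fun u => (1 + u) ^ ((3 : ℝ) / 2)
  have hsum : Tendsto (fun u => Q u + a u) (𝓝 0) (𝓝 2) := by
    have : Continuous fun u => Q u + a u := by fun_prop (disch := norm_num)
    convert this.tendsto 0 using 2
    norm_num [Q, a]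
  have hfactor : Tendsto (fun u => (1 / 8 + 9 / 64 * u) / (Q u + a u)) (𝓝 0)
      (𝓝 ((1 / 8 + 9 / 64 * 0) / 2)) :=
    (tendsto_const_nhds.add (tendsto_id.const_mul _)).div hsum two_ne_zero
  refine isBigO_of_eventuallyEq_mul hfactor ?_
  filter_upwards [hsum.eventually_ne two_ne_zero, Ici_mem_nhds (by norm_num : (-1 : ℝ) < 0)]
    with u hne hu
  have hconj : (Q u - a u) * (Q u + a u) = u ^ 3 * (1 / 8 + 9 / 64 * u) := by
    have ha : a u ^ 2 = (1 + u) ^ 3 := rpow_three_halves_sq (by linarith [Set.mem_Ici.1 hu])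
    rw [mul_comm, ← sq_sub_sq, ha]
    ring
  rw [eq_comm, mul_div_assoc', div_eq_iff hne, hconj]

theorem sq_rpow_div_two {s : ℝ} (hs : 0 ≤ s) (r : ℝ) : (s ^ 2) ^ (r / 2) = s ^ r := by
  rw [← Real.rpow_two, ← Real.rpow_mul hs]
  ring_nf

noncomputable def bakerTrunc (l x : ℝ) : ℝ :=
  1 + l * x + 4 / 3 * x ^ ((3 : ℝ) / 2) + 2 * l / 5 * x ^ ((5 : ℝ) / 2) +
    1 / 3 * x ^ (3 : ℕ) + 3 * l ^ 2 / 70 * x ^ ((7 : ℝ) / 2)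

noncomputable def bakerTruncDeriv (l x : ℝ) : ℝ :=
  l + 2 * x ^ ((1 : ℝ) / 2) + l * x ^ ((3 : ℝ) / 2) + x ^ 2 + 3 * l ^ 2 / 20 * x ^ ((5 : ℝ) / 2)

noncomputable def bakerTruncDeriv2 (l x : ℝ) : ℝ :=
  x ^ (-(1 : ℝ) / 2) + 3 * l / 2 * x ^ ((1 : ℝ) / 2) + 2 * x + 3 * l ^ 2 / 8 * x ^ ((3 : ℝ) / 2)

noncomputable def bakerPoly (l s : ℝ) : ℝ :=
  1 + l * s ^ 2 + 4 / 3 * s ^ 3 + 2 * l / 5 * s ^ 5 + 1 / 3 * s ^ 6 + 3 * l ^ 2 / 70 * s ^ 7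

noncomputable def bakerCurvPoly (l s : ℝ) : ℝ :=
  1 + 3 * l / 2 * s ^ 2 + 2 * s ^ 3 + 3 * l ^ 2 / 8 * s ^ 4

section Derivatives

variable (l : ℝ)

-- All exponents are at least `1`, so this holds at `x ≤ 0` too.
theorem hasDerivAt_bakerTrunc (x : ℝ) : HasDerivAt (bakerTrunc l) (bakerTruncDeriv l x) x := by
  have hpow (p : ℝ) (hp : 1 ≤ p) := Real.hasDerivAt_rpow_const (x := x) (Or.inr hp)
  refine (((((((hasDerivAt_id x).const_mul l).const_add 1).add
    ((hpow (3 / 2) (by norm_num)).const_mul (4 / 3))).add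
    ((hpow (5 / 2) (by norm_num)).const_mul (2 * l / 5))).add
    ((hasDerivAt_pow 3 x).const_mul (1 / 3))).add
    ((hpow (7 / 2) (by norm_num)).const_mul (3 * l ^ 2 / 70))).congr_deriv ?_
  norm_num [bakerTruncDeriv]
  ring

theorem hasDerivAt_bakerTruncDeriv {x : ℝ} (hx : 0 < x) :
    HasDerivAt (bakerTruncDeriv l) (bakerTruncDeriv2 l x) x := by
  have hpow (p : ℝ) := Real.hasDerivAt_rpow_const (x := x) (p := p) (Or.inl hx.ne')
  refine ((((((hpow (1 / 2)).const_mul 2).const_add l).add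
    ((hpow (3 / 2)).const_mul l)).add (hasDerivAt_pow 2 x)).add
    ((hpow (5 / 2)).const_mul (3 * l ^ 2 / 20))).congr_deriv ?_
  norm_num [bakerTruncDeriv2]
  ring

theorem deriv_deriv_bakerTrunc {x : ℝ} (hx : 0 < x) :
    deriv (deriv (bakerTrunc l)) x = bakerTruncDeriv2 l x := by
  rw [funext fun x => (hasDerivAt_bakerTrunc l x).deriv, (hasDerivAt_bakerTruncDeriv l hx).deriv]

theorem bakerTrunc_zero : bakerTrunc l 0 = 1 := by
  norm_num [bakerTrunc]

theorem bakerTruncDeriv_zero : bakerTruncDeriv l 0 = l := by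
  norm_num [bakerTruncDeriv]

end Derivatives

section Substitution

variable (l : ℝ) {s : ℝ}

theorem bakerTrunc_sq (hs : 0 ≤ s) : bakerTrunc l (s ^ 2) = bakerPoly l s := by
  simp only [bakerTrunc, bakerPoly, sq_rpow_div_two hs]
  norm_num
  ring

theorem deriv_deriv_bakerTrunc_sq (hs : 0 < s) :
    deriv (deriv (bakerTrunc l)) (s ^ 2) = s⁻¹ * bakerCurvPoly l s := by
  rw [deriv_deriv_bakerTrunc l (by positivity)]
  simp only [bakerTruncDeriv2, bakerCurvPoly, sq_rpow_div_two hs.le, Real.rpow_neg_one]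
  norm_num
  field_simp

theorem residual_bakerTrunc_sq (hs : 0 < s) :
    deriv (deriv (bakerTrunc l)) (s ^ 2) -
        (s ^ 2) ^ (-(1 : ℝ) / 2) * bakerTrunc l (s ^ 2) ^ ((3 : ℝ) / 2) =
      s⁻¹ * (bakerCurvPoly l s - bakerPoly l s ^ ((3 : ℝ) / 2)) := by
  rw [deriv_deriv_bakerTrunc_sq l hs, bakerTrunc_sq l hs.le, sq_rpow_div_two hs.le,
    Real.rpow_neg_one]
  ring

end Substitution

theorem isBigO_bakerCurvPoly_sub_rpow (l : ℝ) :
    (fun s => bakerCurvPoly l s - bakerPoly l s ^ ((3 : ℝ) / 2)) =O[𝓝 0] (· ^ 5) := by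
  set u : ℝ → ℝ := fun s => l * s ^ 2 + 4 / 3 * s ^ 3 + 2 * l / 5 * s ^ 5 + 1 / 3 * s ^ 6 +
    3 * l ^ 2 / 70 * s ^ 7
  have hu : Tendsto u (𝓝 0) (𝓝 0) := by
    have : Continuous u := by fun_prop
    simpa [u] using this.tendsto 0
  have hu_sq : u =O[𝓝 0] (· ^ 2) := by
    refine isBigO_of_eventuallyEq_mul
      (g := fun s => l + 4 / 3 * s + 2 * l / 5 * s ^ 3 + 1 / 3 * s ^ 4 + 3 * l ^ 2 / 70 * s ^ 5)
      (Continuous.tendsto (by fun_prop) 0) (Eventually.of_forall fun s => ?_)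
    ring
  have hcube : (fun s => u s ^ 3) =O[𝓝 0] (· ^ 5) :=
    (hu_sq.pow 3).trans <| by simpa only [← pow_mul] using (isLittleO_pow_pow (by norm_num)).isBigO
  have hbinom := (isBigO_one_add_rpow_three_halves.comp_tendsto hu).trans hcube
  -- For `w = l s² + 4s³/3`: `bakerCurvPoly l s = Q(w) - s⁵ (l + 2s/3)`, and
  -- `Q(w) - Q(u) = (w - u)(3/2 + 3(w + u)/8)` with `w - u = -s⁵ (2l/5 + s/3 + 3l²s²/70)`.
  have hpoly :
      (fun s => bakerCurvPoly l s - (1 + 3 / 2 * u s + 3 / 8 * u s ^ 2)) =O[𝓝 0] (· ^ 5) := by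
    refine isBigO_of_eventuallyEq_mul
      (g := fun s => -((2 * l / 5 + s / 3 + 3 * l ^ 2 / 70 * s ^ 2) *
        (3 / 2 + 3 / 8 * (l * s ^ 2 + 4 / 3 * s ^ 3 + u s)) + l + 2 / 3 * s))
      (Continuous.tendsto (by fun_prop) 0) (Eventually.of_forall fun s => ?_)
    simp only [bakerCurvPoly, u]
    ring
  refine (hpoly.add hbinom).congr_left fun s => ?_
  have hP : bakerPoly l s = 1 + u s := by simp only [bakerPoly, u]; ring
  simp only [Function.comp, hP]
  ring

theorem isBigO_residual_bakerTrunc (l : ℝ) :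
    (fun x => deriv (deriv (bakerTrunc l)) x - x ^ (-(1 : ℝ) / 2) * bakerTrunc l x ^ ((3 : ℝ) / 2))
      =O[𝓝[>] 0] (· ^ 2) := by
  have hsqrt : Tendsto Real.sqrt (𝓝[>] 0) (𝓝 0) :=
    (Real.continuous_sqrt.tendsto' 0 0 Real.sqrt_zero).mono_left nhdsWithin_le_nhds
  refine ((isBigO_refl (fun x => (√x)⁻¹) _).mul
    ((isBigO_bakerCurvPoly_sub_rpow l).comp_tendsto hsqrt)).congr' ?_ ?_
  all_goals filter_upwards [self_mem_nhdsWithin] with x (hx : 0 < x)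
  · have := residual_bakerTrunc_sq l (Real.sqrt_pos.2 hx)
    rw [Real.sq_sqrt hx.le] at this
    exact this.symm
  · have hs := Real.sqrt_pos.2 hx
    calc (√x)⁻¹ * √x ^ 5 = (√x ^ 2) ^ 2 := by field_simp
      _ = x ^ 2 := by rw [Real.sq_sqrt hx.le]

/-- For the truncated Baker series
`y(x) = 1 + λx + (4/3)x^{3/2} + (2λ/5)x^{5/2} + (1/3)x³ + (3λ²/70)x^{7/2}`,
the Thomas–Fermi residual `y'' − x^{−1/2} y^{3/2}` is `O(x²)` as `x → 0⁺`;
moreover `y(0) = 1`, `y` tends to `1` as `x → 0⁺`, and `y` has right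
derivative `λ` at `0`. -/
theorem stmt_10 (l : ℝ) (y : ℝ → ℝ)
    (hy : ∀ x : ℝ, y x =
      1 + l * x + 4 / 3 * x ^ ((3 : ℝ) / 2) + 2 * l / 5 * x ^ ((5 : ℝ) / 2) +
        1 / 3 * x ^ (3 : ℕ) + 3 * l ^ 2 / 70 * x ^ ((7 : ℝ) / 2)) :
    (fun x : ℝ => deriv (deriv y) x - x ^ (-(1 : ℝ) / 2) * y x ^ ((3 : ℝ) / 2))
        =O[𝓝[>] (0 : ℝ)] (fun x : ℝ => x ^ 2) ∧
      y 0 = 1 ∧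
      Tendsto y (𝓝[>] (0 : ℝ)) (𝓝 1) ∧
      HasDerivWithinAt y l (Set.Ici 0) 0 := by
  obtain rfl : y = bakerTrunc l := funext hy
  have hderiv := hasDerivAt_bakerTrunc l 0
  rw [bakerTruncDeriv_zero] at hderiv
  refine ⟨isBigO_residual_bakerTrunc l, bakerTrunc_zero l, ?_, hderiv.hasDerivWithinAt⟩
  simpa only [bakerTrunc_zero] using hderiv.continuousAt.tendsto.mono_left nhdsWithin_le_nhds
end
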